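/- arXiv:2605.03685 — 3 statements merged into one kernel-verified Lean document; each statement's English description precedes it below -/
import Mathlib

section
/- Let ε ∈ (0,1] and a ≥ 0. Suppose an estimate ã₁ satisfies |ã₁ - a| ≤ (√ε/(2√5))·√a + ε/80. If ã₁ > 3ε/4, then a > ε/2 and moreover |ã₁ - a| < a/2, so that a/2 < ã₁ < 3a/2. -/
/-- Two-stage amplitude estimation, first stage large-outcome case:
if `|ã₁ - a| ≤ (√ε/(2√5))·√a + ε/80` and `ã₁ > 3ε/4`, then `a > ε/2`,
`|ã₁ - a| < a/2`, and hence `a/2 < ã₁ < 3a/2`. -/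
theorem stmt_1 (ε a a1 : ℝ) (hε0 : 0 < ε) (hε1 : ε ≤ 1) (ha0 : 0 ≤ a)
    (h : |a1 - a| ≤ Real.sqrt ε / (2 * Real.sqrt 5) * Real.sqrt a + ε / 80)
    (hlarge : 3 * ε / 4 < a1) :
    ε / 2 < a ∧ |a1 - a| < a / 2 ∧ a / 2 < a1 ∧ a1 < 3 * a / 2 := by
  have s5 : (0:ℝ) < Real.sqrt 5 := Real.sqrt_pos.mpr (by norm_num)
  have sa : 0 ≤ Real.sqrt a := Real.sqrt_nonneg a
  have se : 0 ≤ Real.sqrt ε := Real.sqrt_nonneg ε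
  have hsa2 : Real.sqrt a ^ 2 = a := Real.sq_sqrt ha0
  have hse2 : Real.sqrt ε ^ 2 = ε := Real.sq_sqrt hε0.le
  have hs52 : Real.sqrt 5 ^ 2 = 5 := Real.sq_sqrt (by norm_num)
  have hf : (223/100 : ℝ) ≤ Real.sqrt 5 := by nlinarith
  have hrw : Real.sqrt ε / (2 * Real.sqrt 5) * Real.sqrt a
      = Real.sqrt ε * Real.sqrt a / (2 * Real.sqrt 5) := by ring
  rw [hrw] at h
  have hab := abs_le.mp h
  have hstnn : 0 ≤ Real.sqrt ε * Real.sqrt a := mul_nonneg se sa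
  have hkey : Real.sqrt ε * Real.sqrt a ≤ Real.sqrt ε ^ 2 / 3 + 3 * Real.sqrt a ^ 2 / 4 := by
    nlinarith [sq_nonneg (Real.sqrt ε - 3/2 * Real.sqrt a)]
  have hdivb : ∀ M : ℝ, Real.sqrt ε * Real.sqrt a ≤ M →
      Real.sqrt ε * Real.sqrt a / (2 * Real.sqrt 5) ≤ M / (446/100) := by
    intro M hle
    have h1 : Real.sqrt ε * Real.sqrt a / (2 * Real.sqrt 5)
        ≤ Real.sqrt ε * Real.sqrt a / (446/100) :=
      div_le_div_of_nonneg_left hstnn (by norm_num) (by linarith)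
    linarith
  have hA : ε / 2 < a := by
    by_contra hc
    push_neg at hc
    have hd := hdivb (17 * ε / 24) (by nlinarith)
    linarith [hab.2]
  have hhalf : |a1 - a| < a / 2 := by
    have hd := hdivb (17 * a / 12) (by nlinarith)
    calc |a1 - a| ≤ Real.sqrt ε * Real.sqrt a / (2 * Real.sqrt 5) + ε / 80 := h
      _ < a / 2 := by linarith
  have hlt := abs_lt.mp hhalf
  exact ⟨hA, hhalf, by linarith [hlt.1], by linarith [hlt.2]⟩
end

section
/- Fix 0 < q < 1 and ε ∈ (0,1). Let m be a positive integer, δ_j = 2^{-j-2}, ε_j = ε/(96·2^{2(j+1)(1−q)}·m), and B_j = 4·2^{2j(1−q)}. Suppose P_j : ℝ → ℝ satisfies |P_j(x) − (δ_j^{1−q}/2)·x^{q−1}| ≤ ε_j for all x ∈ [δ_j, 1] and |P_j(x)| ≤ 1 for all x ∈ [−1,1]. Then for every x ∈ (2^{-(j+1)}, 2^{-(j-1)}] (so that x/2 ∈ [δ_j, 1]), we have |max{B_j, B_{j+1}}·P_j(x/2)² − x^{2(q−1)}| ≤ ε/(12m). -/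
/-- Local approximation (Condition 2) for `g(x) = x^{q-1}`, `0 < q < 1`:
if `P_j` approximates `(δ_j^{1-q}/2)·x^{q-1}` to within `ε_j` on `[δ_j, 1]` and is
bounded by `1` on `[-1,1]`, then for `x ∈ (2^{-(j+1)}, 2^{-(j-1)}]`,
`|max{B_j, B_{j+1}}·P_j(x/2)² − x^{2(q-1)}| ≤ ε/(12m)`. -/
theorem stmt_7 (q ε : ℝ) (hq0 : 0 < q) (hq1 : q < 1) (hε0 : 0 < ε) (hε1 : ε < 1)
    (m : ℕ) (hm : 0 < m) (j : ℕ) (hj : 1 ≤ j) (P : ℝ → ℝ)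
    (hP : ∀ x ∈ Set.Icc ((2 : ℝ) ^ (-(j : ℝ) - 2)) 1,
      |P x - ((2 : ℝ) ^ (-(j : ℝ) - 2)) ^ (1 - q) / 2 * x ^ (q - 1)| ≤
        ε / (96 * (2 : ℝ) ^ (2 * ((j : ℝ) + 1) * (1 - q)) * m))
    (hPb : ∀ x ∈ Set.Icc (-1 : ℝ) 1, |P x| ≤ 1) :
    ∀ x : ℝ, (2 : ℝ) ^ (-((j : ℝ) + 1)) < x → x ≤ (2 : ℝ) ^ (-((j : ℝ) - 1)) →
      |max (4 * (2 : ℝ) ^ (2 * (j : ℝ) * (1 - q))) (4 * (2 : ℝ) ^ (2 * ((j : ℝ) + 1) * (1 - q))) *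
          P (x / 2) ^ 2 - x ^ (2 * (q - 1))| ≤ ε / (12 * m) := by
  intro x hx1 hx2
  have h2 : (0:ℝ) < 2 := two_pos
  set δ : ℝ := (2:ℝ) ^ (-(j:ℝ) - 2) with hδ
  have hδpos : 0 < δ := Real.rpow_pos_of_pos h2 _
  have hxpos : 0 < x := lt_trans (Real.rpow_pos_of_pos h2 _) hx1
  have hq' : 0 < 1 - q := by linarith
  -- x/2 ∈ [δ, 1]
  have h2δ : (2:ℝ) * δ = (2:ℝ) ^ (-((j:ℝ) + 1)) := by
    rw [hδ, show -((j:ℝ)+1) = (-(j:ℝ)-2) + 1 by ring, Real.rpow_add h2, Real.rpow_one]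
    ring
  have hyδ : δ ≤ x / 2 := by
    rw [le_div_iff₀ h2]
    nlinarith [hx1, h2δ]
  have hy1 : x / 2 ≤ 1 := by
    have : x ≤ 1 := by
      refine hx2.trans (Real.rpow_le_one_of_one_le_of_nonpos (by norm_num) ?_)
      have : (1:ℝ) ≤ j := by exact_mod_cast hj
      linarith
    linarith
  have hymem : x / 2 ∈ Set.Icc δ 1 := ⟨hyδ, hy1⟩
  have hypos : 0 < x / 2 := lt_of_lt_of_le hδpos hyδ
  set G : ℝ := δ ^ (1 - q) / 2 * (x / 2) ^ (q - 1) with hG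
  -- G bounds
  have hGpos : 0 ≤ G := by
    apply mul_nonneg (by positivity) (Real.rpow_nonneg hypos.le _)
  have hG1 : G ≤ 1 := by
    have h1 : (x/2) ^ (q-1) ≤ δ ^ (q-1) :=
      Real.rpow_le_rpow_of_nonpos hδpos hyδ (by linarith)
    have h2' : δ ^ (1-q) * δ ^ (q-1) = 1 := by
      rw [← Real.rpow_add hδpos]; norm_num
    have h3 : δ ^ (1-q) / 2 * (x/2)^(q-1) ≤ δ ^ (1-q) / 2 * δ^(q-1) := by
      apply mul_le_mul_of_nonneg_left h1 (by positivity)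
    rw [hG]
    calc δ ^ (1-q) / 2 * (x/2)^(q-1) ≤ δ ^ (1-q) / 2 * δ^(q-1) := h3
      _ = (δ ^ (1-q) * δ^(q-1)) / 2 := by ring
      _ = 1/2 := by rw [h2']
      _ ≤ 1 := by norm_num
  -- max equals B_{j+1}
  set K : ℝ := 2 * ((j:ℝ) + 1) * (1 - q) with hK
  have hKpos : (0:ℝ) < (2:ℝ) ^ K := Real.rpow_pos_of_pos h2 _
  have hmax : max (4 * (2:ℝ) ^ (2 * (j:ℝ) * (1 - q))) (4 * (2:ℝ) ^ K)
      = 4 * (2:ℝ) ^ K := by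
    apply max_eq_right
    have : (2:ℝ) ^ (2 * (j:ℝ) * (1 - q)) ≤ (2:ℝ) ^ K := by
      apply Real.rpow_le_rpow_of_exponent_le (by norm_num)
      rw [hK]; nlinarith
    linarith
  -- key identity: 4·2^K · G² = x^{2(q-1)}
  have key : 4 * (2:ℝ) ^ K * G ^ 2 = x ^ (2 * (q - 1)) := by
    have e1 : G ^ 2 = δ ^ ((1-q)*2) * (x/2) ^ ((q-1)*2) / 4 := by
      rw [hG, mul_pow, div_pow, ← Real.rpow_natCast (δ ^ (1-q)) 2, ← Real.rpow_natCast ((x/2) ^ (q-1)) 2,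
        ← Real.rpow_mul hδpos.le, ← Real.rpow_mul hypos.le]
      push_cast
      ring
    rw [e1]
    have e2 : δ ^ ((1-q)*2) = (2:ℝ) ^ ((-(j:ℝ)-2) * ((1-q)*2)) := by
      rw [hδ, ← Real.rpow_mul h2.le]
    have e3 : (x/2) ^ ((q-1)*2) = x ^ ((q-1)*2) / (2:ℝ) ^ ((q-1)*2) :=
      Real.div_rpow hxpos.le h2.le _
    rw [e2, e3]
    have hB : (0:ℝ) < (2:ℝ) ^ ((q-1)*2) := Real.rpow_pos_of_pos h2 _
    rw [show (4:ℝ) * (2:ℝ) ^ K * ((2:ℝ)^((-(j:ℝ)-2)*((1-q)*2)) *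
        (x ^ ((q-1)*2) / (2:ℝ)^((q-1)*2)) / 4) =
        ((2:ℝ) ^ K * (2:ℝ)^((-(j:ℝ)-2)*((1-q)*2)) / (2:ℝ)^((q-1)*2)) * x ^ ((q-1)*2) by
      field_simp]
    rw [← Real.rpow_add h2, ← Real.rpow_sub h2]
    rw [show K + (-(j:ℝ)-2)*((1-q)*2) - (q-1)*2 = 0 by rw [hK]; ring]
    rw [Real.rpow_zero, one_mul]
    congr 1
    ring
  -- bounds on P
  have hPG : |P (x/2) - G| ≤ ε / (96 * (2:ℝ) ^ K * m) := hP _ hymem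
  have hPb' : |P (x/2)| ≤ 1 := hPb _ ⟨by linarith, hy1⟩
  -- conclude
  rw [hmax, ← key]
  have habs : |P (x/2) ^ 2 - G ^ 2| ≤ 2 * (ε / (96 * (2:ℝ) ^ K * m)) := by
    have : P (x/2) ^ 2 - G ^ 2 = (P (x/2) - G) * (P (x/2) + G) := by ring
    rw [this, abs_mul]
    have h4 : |P (x/2) + G| ≤ 2 := by
      have := abs_le.mp hPb'
      rw [abs_le]; constructor <;> nlinarith
    calc |P (x/2) - G| * |P (x/2) + G| ≤ (ε / (96 * (2:ℝ) ^ K * m)) * 2 := by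
          apply mul_le_mul hPG h4 (abs_nonneg _)
          positivity
      _ = 2 * (ε / (96 * (2:ℝ) ^ K * m)) := by ring
  have : |4 * (2:ℝ) ^ K * P (x/2) ^ 2 - 4 * (2:ℝ) ^ K * G ^ 2|
      = 4 * (2:ℝ) ^ K * |P (x/2) ^ 2 - G ^ 2| := by
    rw [← mul_sub, abs_mul, abs_of_pos (by positivity)]
  rw [this]
  have hmR : (0:ℝ) < m := by exact_mod_cast hm
  calc 4 * (2:ℝ) ^ K * |P (x/2) ^ 2 - G ^ 2|
      ≤ 4 * (2:ℝ) ^ K * (2 * (ε / (96 * (2:ℝ) ^ K * m))) := by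
        apply mul_le_mul_of_nonneg_left habs (by positivity)
    _ = ε / (12 * m) := by field_simp; ring
end

section
/- Fix 0 < q < 1 and ε ∈ (0,1). Let m be a positive integer, δ_m = 2^{-m-2}, ε_m = ε/(96·2^{2(m+1)(1−q)}·m), and B_m = 4·2^{2m(1−q)}. Suppose P_m : ℝ → ℝ satisfies |P_m(x) − (δ_m^{1−q}/2)·x^{q−1}| ≤ ε_m for all x ∈ [δ_m, 1]. Then for every x ∈ (2^{-(m+1)}, 2^{-m}], B_m·P_m(x/2)² ≤ 2^{3−q}·x^{2(q−1)}. -/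
set_option maxHeartbeats 1600000 in
/-- Tail-polynomial bound (Condition 3) for `g(x) = x^{q-1}`, `0 < q < 1`:
if `P_m` approximates `(δ_m^{1-q}/2)·x^{q-1}` to within `ε_m` on `[δ_m, 1]`,
then for `x ∈ (2^{-(m+1)}, 2^{-m}]`, `B_m·P_m(x/2)² ≤ 2^{3-q}·x^{2(q-1)}`. -/
theorem stmt_8 (q ε : ℝ) (hq0 : 0 < q) (hq1 : q < 1) (hε0 : 0 < ε) (hε1 : ε < 1)
    (m : ℕ) (hm : 0 < m) (P : ℝ → ℝ)
    (hP : ∀ x ∈ Set.Icc ((2 : ℝ) ^ (-(m : ℝ) - 2)) 1,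
      |P x - ((2 : ℝ) ^ (-(m : ℝ) - 2)) ^ (1 - q) / 2 * x ^ (q - 1)| ≤
        ε / (96 * (2 : ℝ) ^ (2 * ((m : ℝ) + 1) * (1 - q)) * m)) :
    ∀ x : ℝ, (2 : ℝ) ^ (-((m : ℝ) + 1)) < x → x ≤ (2 : ℝ) ^ (-(m : ℝ)) →
      4 * (2 : ℝ) ^ (2 * (m : ℝ) * (1 - q)) * P (x / 2) ^ 2 ≤
        (2 : ℝ) ^ (3 - q) * x ^ (2 * (q - 1)) := by
  intro x hx1 hx2
  have h2 : (0:ℝ) < 2 := two_pos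
  have hx0 : 0 < x := lt_trans (Real.rpow_pos_of_pos h2 _) hx1
  set e := (m:ℝ) with he
  have hem : (1:ℝ) ≤ e := by rw [he]; exact_mod_cast hm
  have hmul : ∀ a b : ℝ, (2:ℝ)^a * (2:ℝ)^b = (2:ℝ)^(a+b) :=
    fun a b => (Real.rpow_add h2 a b).symm
  have h4 : (2:ℝ)^(2:ℝ) = 4 := by
    rw [show (2:ℝ) = ((2:ℕ):ℝ) by norm_num, Real.rpow_natCast]; norm_num
  -- membership of x/2 in the interval
  have hmem : x / 2 ∈ Set.Icc ((2:ℝ) ^ (-e - 2)) 1 := by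
    constructor
    · have hlow : (2:ℝ)^(-e-2) = (2:ℝ)^(-(e+1)) / 2 := by
        rw [show (-e-2) = -(e+1) - 1 by ring, Real.rpow_sub h2, Real.rpow_one]
      rw [hlow]; linarith
    · have h2' : (2:ℝ)^(-e) / 2 = (2:ℝ)^(-e-1) := by
        rw [Real.rpow_sub h2, Real.rpow_one]
      have h3' : (2:ℝ)^(-e-1) ≤ 1 :=
        Real.rpow_le_one_of_one_le_of_nonpos one_le_two (by linarith)
      have h1' : x / 2 ≤ (2:ℝ)^(-e) / 2 := by linarith
      linarith [h2'.le]
  have hPx := hP (x/2) hmem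
  -- abbreviations
  set t := x ^ (q-1) with ht
  set c := (2:ℝ) ^ ((-e-1)*(1-q)-1) with hc
  set K := (2:ℝ) ^ (2*e*(1-q)) with hK
  set E := ε / (96 * (2:ℝ) ^ (2*(e+1)*(1-q)) * e) with hE
  have ht0 : 0 < t := Real.rpow_pos_of_pos hx0 _
  have hc0 : 0 < c := Real.rpow_pos_of_pos h2 _
  have hK0 : 0 < K := Real.rpow_pos_of_pos h2 _
  have hG0 : (0:ℝ) < (2:ℝ) ^ (2*(e+1)*(1-q)) := Real.rpow_pos_of_pos h2 _
  have hE0 : 0 ≤ E := by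
    apply div_nonneg hε0.le
    nlinarith
  -- the main approximation term equals c * t
  have key : (x/2) ^ (q-1) = (2:ℝ)^(1-q) * t := by
    have h21 : (2:ℝ)^(1-q) * (2:ℝ)^(q-1) = 1 := by rw [hmul]; norm_num
    rw [Real.div_rpow hx0.le h2.le, div_eq_iff (Real.rpow_pos_of_pos h2 (q-1)).ne', ht]
    linear_combination (-x^(q-1)) * h21
  have hcc : (2:ℝ)^((-e-2)*(1-q)) * (2:ℝ)^(1-q) = 2 * c := by
    rw [hmul, hc, show (-e-1)*(1-q)-1 = ((-e-2)*(1-q)+(1-q)) - 1 by ring,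
        Real.rpow_sub h2, Real.rpow_one]
    ring
  have hD : ((2:ℝ) ^ (-e - 2)) ^ (1 - q) / 2 * (x/2) ^ (q - 1) = c * t := by
    rw [← Real.rpow_mul h2.le, key]
    linear_combination (t/2) * hcc
  rw [hD] at hPx
  have habs : |P (x/2)| ≤ c*t + E := by
    have h := abs_le.mp hPx
    have hct0 : 0 ≤ c * t := by positivity
    rw [abs_le]
    constructor <;> nlinarith [h.1, h.2]
  have hsq : P (x/2)^2 ≤ (c*t+E)^2 := by
    rw [← sq_abs]
    exact pow_le_pow_left₀ (abs_nonneg _) habs 2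
  -- lower bound for t and for c*t
  have htlb : (2:ℝ)^(e*(1-q)) ≤ t := by
    have h := Real.rpow_le_rpow_of_nonpos hx0 hx2 (by linarith : q-1 ≤ 0)
    rw [← Real.rpow_mul h2.le, show (-e)*(q-1) = e*(1-q) by ring] at h
    exact h
  have hct : 1/4 ≤ c*t := by
    have h1 : c * (2:ℝ)^(e*(1-q)) = (2:ℝ)^(q-2) := by
      rw [hc, hmul, show ((-e-1)*(1-q)-1) + e*(1-q) = q-2 by ring]
    have h2' : (2:ℝ)^(-2:ℝ) ≤ (2:ℝ)^(q-2) :=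
      Real.rpow_le_rpow_of_exponent_le one_le_two (by linarith)
    have h3' : (2:ℝ)^(-2:ℝ) = 1/4 := by
      rw [show (-2:ℝ) = ((-2:ℤ):ℝ) by norm_num, Real.rpow_intCast]; norm_num
    calc (1:ℝ)/4 = (2:ℝ)^(-2:ℝ) := h3'.symm
      _ ≤ (2:ℝ)^(q-2) := h2'
      _ = c * (2:ℝ)^(e*(1-q)) := h1.symm
      _ ≤ c * t := mul_le_mul_of_nonneg_left htlb hc0.le
  -- E is small
  have hE96 : E ≤ 1/96 := by
    have hG : (1:ℝ) ≤ (2:ℝ)^(2*(e+1)*(1-q)) := by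
      rw [← Real.rpow_zero 2]
      exact Real.rpow_le_rpow_of_exponent_le one_le_two (by nlinarith)
    have hGe : (1:ℝ)*1 ≤ (2:ℝ)^(2*(e+1)*(1-q)) * e :=
      mul_le_mul hG hem zero_le_one (le_trans zero_le_one hG)
    have hden : (96:ℝ) ≤ 96 * (2:ℝ)^(2*(e+1)*(1-q)) * e := by
      rw [mul_assoc]; nlinarith [hGe]
    exact div_le_div₀ (by norm_num) hε1.le (by norm_num) hden
  have hEct : E ≤ c*t/24 := by linarith
  -- power identities
  have f2 : 4 * K * c^2 = (2:ℝ)^(2*q-2) := by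
    rw [hK, hc, sq, hmul, mul_assoc, hmul,
        show 2*e*(1-q) + ((((-e-1)*(1-q)-1)) + (((-e-1)*(1-q)-1))) = 2*q-4 by ring,
        show (2*q-2 : ℝ) = (2*q-4) + 2 by ring, Real.rpow_add h2, h4]
    ring
  have f5 : x ^ (2*(q-1)) = t^2 := by
    rw [show (2:ℝ)*(q-1) = (q-1)*((2:ℕ):ℝ) by push_cast; ring,
        Real.rpow_mul hx0.le, Real.rpow_natCast, ht]
  have f6 : 4 * (2:ℝ)^(2*q-2) ≤ (2:ℝ)^(3-q) := by
    rw [show (3-q:ℝ) = (2*q-2) + (5-3*q) by ring, Real.rpow_add h2,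
        mul_comm ((2:ℝ)^(2*q-2))]
    exact mul_le_mul_of_nonneg_right
      (by rw [← h4]; exact Real.rpow_le_rpow_of_exponent_le one_le_two (by linarith))
      (Real.rpow_pos_of_pos h2 (2*q-2)).le
  -- final chain
  calc 4 * K * P (x/2)^2 ≤ 4 * K * (c*t+E)^2 :=
        mul_le_mul_of_nonneg_left hsq (by positivity)
    _ ≤ 4 * K * ((25/24)*(c*t))^2 := by
        refine mul_le_mul_of_nonneg_left ?_ (by positivity)
        exact pow_le_pow_left₀ (by positivity) (by linarith) 2
    _ = (625/576) * (4*K*c^2) * t^2 := by ring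
    _ = (625/576) * (2:ℝ)^(2*q-2) * t^2 := by rw [f2]
    _ ≤ (4 * (2:ℝ)^(2*q-2)) * t^2 := by
        have hp : (0:ℝ) < (2:ℝ)^(2*q-2) := Real.rpow_pos_of_pos h2 _
        nlinarith [sq_nonneg t]
    _ ≤ (2:ℝ)^(3-q) * t^2 := mul_le_mul_of_nonneg_right f6 (sq_nonneg t)
    _ = (2:ℝ)^(3-q) * x^(2*(q-1)) := by rw [f5]
end
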